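/- arXiv:1608.00157 — 4 statements merged into one kernel-verified Lean document; each statement's English description precedes it below -/
import Mathlib

section
/- Let z = x + iy be a complex number with x ≥ 5/4, and let k ≥ 1 be a natural number. Then |1 + z + z² + ⋯ + z^k|² > |z|^{2(k−1)} · (|z|² + 2x − 1). -/
open Complex Finset

/-!
With `x = Re z`, multiplying by `‖z - 1‖² = ‖z‖² - 2x + 1 > 0` turns `‖1 + ⋯ + z^k‖²` into
`‖z^(k+1) - 1‖² = ‖z‖^(2(k+1)) - 2 Re z^(k+1) + 1` and the right-hand side into
`‖z‖^(2(k+1)) - ‖z‖^(2(k-1)) (2x - 1)²`, so the claim becomes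
`2 Re z^(k+1) < ‖z‖^(2(k-1)) (2x - 1)² + 1`.
For `k ≥ 3` this follows from `Re z^(k+1) ≤ ‖z‖^(k+1) ≤ ‖z‖^(2(k-1))` and `(2x - 1)² ≥ 9/4`;
for `k = 1, 2` from `Re z² = 2x² - ‖z‖²` and `Re z³ = 4x³ - 3x‖z‖²`.
-/

namespace Complex

lemma sq_norm_sub_one (w : ℂ) : ‖w - 1‖ ^ 2 = ‖w‖ ^ 2 - 2 * w.re + 1 := by
  simp only [Complex.sq_norm, normSq_apply, sub_re, sub_im, one_re, one_im]
  ring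

lemma sq_norm_geom_sum_mul_sq_norm_sub_one (z : ℂ) (n : ℕ) :
    ‖∑ j ∈ range n, z ^ j‖ ^ 2 * ‖z - 1‖ ^ 2 = ‖z ^ n - 1‖ ^ 2 := by
  rw [← mul_pow, ← norm_mul, geom_sum_mul]

lemma re_sq_eq (z : ℂ) : (z ^ 2).re = 2 * z.re ^ 2 - ‖z‖ ^ 2 := by
  rw [Complex.sq_norm, normSq_apply, pow_two, mul_re]
  ring

lemma re_pow_three_eq (z : ℂ) : (z ^ 3).re = 4 * z.re ^ 3 - 3 * z.re * ‖z‖ ^ 2 := by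
  rw [Complex.sq_norm, normSq_apply, show z ^ 3 = z * z * z by ring]
  simp only [mul_re, mul_im]
  ring

lemma lt_sq_norm_geom_sum_iff {z : ℂ} (hz : z ≠ 1) (m : ℕ) :
    ‖z‖ ^ (2 * m) * (‖z‖ ^ 2 + 2 * z.re - 1) < ‖∑ j ∈ range (m + 2), z ^ j‖ ^ 2 ↔
      2 * (z ^ (m + 2)).re < ‖z‖ ^ (2 * m) * (2 * z.re - 1) ^ 2 + 1 := by
  have hd : 0 < ‖z - 1‖ ^ 2 := by
    have := norm_pos_iff.mpr (sub_ne_zero.mpr hz)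
    positivity
  rw [← mul_lt_mul_iff_of_pos_right hd, sq_norm_geom_sum_mul_sq_norm_sub_one,
    sq_norm_sub_one, sq_norm_sub_one, norm_pow]
  have expand : ‖z‖ ^ (2 * m) * (‖z‖ ^ 2 + 2 * z.re - 1) * (‖z‖ ^ 2 - 2 * z.re + 1) =
      (‖z‖ ^ (m + 2)) ^ 2 - ‖z‖ ^ (2 * m) * (2 * z.re - 1) ^ 2 := by
    ring
  rw [expand]
  constructor <;> intro h <;> linarith

lemma two_mul_re_pow_lt {z : ℂ} (hx : 5 / 4 ≤ z.re) (m : ℕ) :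
    2 * (z ^ (m + 2)).re < ‖z‖ ^ (2 * m) * (2 * z.re - 1) ^ 2 + 1 := by
  have hxr : z.re ≤ ‖z‖ := re_le_norm z
  have hxr2 : z.re ^ 2 ≤ ‖z‖ ^ 2 := pow_le_pow_left₀ (by linarith) hxr 2
  match m with
  | 0 =>
    rw [re_sq_eq, mul_zero, pow_zero, one_mul]
    nlinarith [sq_nonneg (z.re - 1)]
  | 1 =>
    rw [re_pow_three_eq, mul_one]
    nlinarith [mul_nonneg (mul_nonneg (by linarith : (0 : ℝ) ≤ z.re) (sub_nonneg.2 hx))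
      (sub_nonneg.2 hx)]
  | n + 2 =>
    have h1r : 1 ≤ ‖z‖ := by linarith
    have hre : (z ^ (n + 4)).re ≤ ‖z‖ ^ (2 * (n + 2)) :=
      calc (z ^ (n + 4)).re ≤ ‖z ^ (n + 4)‖ := re_le_norm _
        _ = ‖z‖ ^ (n + 4) := norm_pow z _
        _ ≤ ‖z‖ ^ (2 * (n + 2)) := pow_le_pow_right₀ h1r (by omega)
    have hb : 9 / 4 ≤ (2 * z.re - 1) ^ 2 := by nlinarith
    have hp : 1 ≤ ‖z‖ ^ (2 * (n + 2)) := one_le_pow₀ h1r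
    nlinarith

end Complex

/-- If `z = x + iy` with `x ≥ 5/4` and `k ≥ 1`, then
`|1 + z + ⋯ + z^k|² > |z|^{2(k-1)} · (|z|² + 2x − 1)`. -/
theorem norm_geom_sum_gt (z : ℂ) (hx : (5 : ℝ) / 4 ≤ z.re) (k : ℕ) (hk : 1 ≤ k) :
    ‖∑ j ∈ Finset.range (k + 1), z ^ j‖ ^ 2 >
      ‖z‖ ^ (2 * (k - 1)) * (‖z‖ ^ 2 + 2 * z.re - 1) := by
  obtain ⟨m, rfl⟩ : ∃ m, k = m + 1 := ⟨k - 1, by omega⟩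
  have hz : z ≠ 1 := by
    rintro rfl
    norm_num at hx
  exact (lt_sq_norm_geom_sum_iff hz m).2 (two_mul_re_pow_lt hx m)
end

section
/- Let τ = ω + 2 in the ring of Eisenstein integers ℤ[ω]. For all natural numbers n ≥ 1 and m ≥ 2, the geometric sum 1 + τⁿ + τ^{2n} + ⋯ + τ^{(m−1)n} = (τ^{nm} − 1)/(τⁿ − 1) is not a unit of ℤ[ω]. -/
open Complex Finset

/-- The primitive cube root of unity `ω = e^{2πi/3}`. -/
noncomputable def ω : ℂ := Complex.exp (2 * Real.pi * Complex.I / 3)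

/-- The ring of Eisenstein integers `ℤ[ω]`, realized as the subring of `ℂ` generated by `ω`. -/
noncomputable def Eisen : Subring ℂ := Subring.closure {ω}

/-- `ω` as an Eisenstein integer. -/
noncomputable def ωE : Eisen := ⟨ω, Subring.subset_closure (Set.mem_singleton ω)⟩

/-- `τ = ω + 2` as an Eisenstein integer. -/
noncomputable def τE : Eisen := ωE + 2

/-
Every nonzero `z = a + bω` has `|z|² = a² - ab + b²` a positive integer, so units of `ℤ[ω]` have
absolute value `1`. If the geometric sum `S` in `x = τⁿ` were a unit, `S (x - 1) = xᵐ - 1` would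
give `|xᵐ - 1| = |x - 1|`. But `|τ|² = 3` and `|τ - 1| = |ω + 1| = 1`, so
`|τⁿ - 1| < 3ⁿ - 1 = |x|² - 1 ≤ |x|ᵐ - 1 ≤ |xᵐ - 1|`.
-/

lemma omega_re : ω.re = -(1 / 2) := by
  rw [ω, show 2 * Real.pi * I / 3 = ((Real.pi - Real.pi / 3 : ℝ) : ℂ) * I by push_cast; ring,
    exp_ofReal_mul_I_re, Real.cos_pi_sub, Real.cos_pi_div_three]

lemma omega_im : ω.im = √3 / 2 := by
  rw [ω, show 2 * Real.pi * I / 3 = ((Real.pi - Real.pi / 3 : ℝ) : ℂ) * I by push_cast; ring,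
    exp_ofReal_mul_I_im, Real.sin_pi_sub, Real.sin_pi_div_three]

lemma omega_sq : ω ^ 2 = -1 - ω := by
  have h := (isPrimitiveRoot_exp 3 (by norm_num)).geom_sum_eq_zero (by norm_num)
  rw [show ((3 : ℕ) : ℂ) = 3 by norm_num, ← ω] at h
  simp only [sum_range_succ, sum_range_zero, pow_zero, pow_one, zero_add] at h
  linear_combination h

lemma exists_int_eq_of_mem_eisen {z : ℂ} (hz : z ∈ Eisen) : ∃ a b : ℤ, z = a + b * ω := by
  induction hz using Subring.closure_induction with
  | mem x hx => exact ⟨0, 1, by simp [Set.mem_singleton_iff.mp hx]⟩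
  | zero => exact ⟨0, 0, by simp⟩
  | one => exact ⟨1, 0, by simp⟩
  | add x y _ _ ihx ihy =>
    obtain ⟨a, b, rfl⟩ := ihx
    obtain ⟨c, d, rfl⟩ := ihy
    exact ⟨a + c, b + d, by push_cast; ring⟩
  | neg x _ ih =>
    obtain ⟨a, b, rfl⟩ := ih
    exact ⟨-a, -b, by push_cast; ring⟩
  | mul x y _ _ ihx ihy =>
    obtain ⟨a, b, rfl⟩ := ihx
    obtain ⟨c, d, rfl⟩ := ihy
    refine ⟨a * c - b * d, a * d + b * c - b * d, ?_⟩
    push_cast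
    linear_combination (b * d : ℂ) * omega_sq

lemma normSq_intCast_add_intCast_mul_omega (a b : ℤ) :
    normSq (a + b * ω) = a ^ 2 - a * b + b ^ 2 := by
  have h3 : √3 ^ 2 = 3 := Real.sq_sqrt (by norm_num)
  simp only [normSq_apply, add_re, add_im, mul_re, mul_im, intCast_re, intCast_im, omega_re,
    omega_im]
  nlinarith

lemma one_le_normSq_of_mem_eisen {z : ℂ} (hz : z ∈ Eisen) (h0 : z ≠ 0) : 1 ≤ normSq z := by
  obtain ⟨a, b, rfl⟩ := exists_int_eq_of_mem_eisen hz
  have hpos := normSq_pos.mpr h0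
  rw [normSq_intCast_add_intCast_mul_omega] at hpos ⊢
  exact_mod_cast (show (0 : ℤ) < a ^ 2 - a * b + b ^ 2 by exact_mod_cast hpos)

lemma norm_coe_eq_one_of_isUnit {u : Eisen} (hu : IsUnit u) : ‖(u : ℂ)‖ = 1 := by
  obtain ⟨v, huv⟩ := isUnit_iff_exists_inv.mp hu
  have hC : (u : ℂ) * v = 1 := by exact_mod_cast congrArg Subtype.val huv
  have hmul : normSq u * normSq v = 1 := by rw [← map_mul, hC, map_one]
  have hu1 := one_le_normSq_of_mem_eisen u.2 (left_ne_zero_of_mul_eq_one hC)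
  have hv1 := one_le_normSq_of_mem_eisen v.2 (right_ne_zero_of_mul_eq_one hC)
  have : normSq u = 1 := by nlinarith
  rwa [normSq_eq_norm_sq, pow_eq_one_iff_of_nonneg (norm_nonneg _) two_ne_zero] at this

lemma coe_τE : (τE : ℂ) = ω + 2 := rfl

lemma norm_τE_sub_one : ‖(τE : ℂ) - 1‖ = 1 := by
  rw [coe_τE, norm_def, show ω + 2 - 1 = ((1 : ℤ) : ℂ) + ((1 : ℤ) : ℂ) * ω by push_cast; ring,
    normSq_intCast_add_intCast_mul_omega]
  norm_num

lemma norm_τE_sq : ‖(τE : ℂ)‖ ^ 2 = 3 := by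
  rw [coe_τE, Complex.sq_norm, show ω + 2 = ((2 : ℤ) : ℂ) + ((1 : ℤ) : ℂ) * ω by push_cast; ring,
    normSq_intCast_add_intCast_mul_omega]
  norm_num

lemma norm_pow_sub_one_lt {z : ℂ} (h1 : ‖z - 1‖ = 1) (h2 : 2 < ‖z‖ ^ 2) {n : ℕ} (hn : 1 ≤ n) :
    ‖z ^ n - 1‖ < ‖z‖ ^ (2 * n) - 1 := by
  induction n, hn using Nat.le_induction with
  | base => rw [pow_one, mul_one, h1]; linarith
  | succ n _ ih =>
    have hz : 1 ≤ ‖z‖ := by nlinarith [norm_nonneg z]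
    have hle : ‖z‖ ^ n ≤ ‖z‖ ^ (2 * n) := pow_le_pow_right₀ hz (by omega)
    calc ‖z ^ (n + 1) - 1‖ ≤ ‖z ^ n * (z - 1)‖ + ‖z ^ n - 1‖ := by
          simpa [mul_sub, pow_succ] using norm_sub_le_norm_sub_add_norm_sub (z ^ (n + 1)) (z ^ n) 1
      _ < ‖z‖ ^ n + (‖z‖ ^ (2 * n) - 1) := by rw [norm_mul, norm_pow, h1, mul_one]; linarith
      _ ≤ ‖z‖ ^ (2 * (n + 1)) - 1 := by
          rw [show 2 * (n + 1) = 2 * n + 2 by ring, pow_add]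
          nlinarith [pow_nonneg (norm_nonneg z) (2 * n)]

/-- For `n ≥ 1` and `m ≥ 2`, the geometric sum
`1 + τⁿ + τ^{2n} + ⋯ + τ^{(m−1)n}` is not a unit of `ℤ[ω]`. -/
theorem geom_sum_not_unit (n m : ℕ) (hn : 1 ≤ n) (hm : 2 ≤ m) :
    ¬ IsUnit (∑ j ∈ Finset.range m, (τE ^ n) ^ j) := by
  intro hu
  set x : ℂ := (τE : ℂ) ^ n with hx
  have hS : ‖∑ j ∈ range m, x ^ j‖ = 1 := by
    simpa [hx] using norm_coe_eq_one_of_isUnit hu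
  have hx1 : 1 ≤ ‖x‖ := by
    rw [hx, norm_pow]
    exact one_le_pow₀ (by nlinarith [norm_nonneg (τE : ℂ), norm_τE_sq])
  have hlt : ‖x - 1‖ < ‖x‖ ^ 2 - 1 := by
    simpa [hx, norm_pow, ← pow_mul, mul_comm] using
      norm_pow_sub_one_lt norm_τE_sub_one (by rw [norm_τE_sq]; norm_num) hn
  refine lt_irrefl (‖x‖ ^ m - 1) ?_
  calc ‖x‖ ^ m - 1 ≤ ‖x ^ m - 1‖ := by simpa using norm_sub_norm_le (x ^ m) 1
    _ = ‖x - 1‖ := by rw [← geom_sum_mul, norm_mul, hS, one_mul]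
    _ < ‖x‖ ^ 2 - 1 := hlt
    _ ≤ ‖x‖ ^ m - 1 := by gcongr
end

section
/- Let ω = e^{2πi/3} ∈ ℂ and τ = ω + 2. For every natural number k ≥ 3 whose residue modulo 12 lies in {3, 4, 5, 6, 7, 8, 9}, one has |τ^k − 1|² > 3^k. -/
/-!
Polar form: `τ = √3 · e^{iπ/6}`, so `τ^k = 3^{k/2} · e^{ikπ/6}`, whose real part is `≤ 0` when
`k mod 12 ∈ [3, 9]`. For `Re z ≤ 0` one has `|z - 1|² = |z|² - 2 Re z + 1 > |z|²`.
-/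

open Complex

noncomputable def τ : ℂ := ω + 2

lemma ω_eq : ω = -(1 / 2) + (Real.sqrt 3 / 2 : ℝ) * I := by
  have hangle : 2 * Real.pi * I / 3 = ((Real.pi - Real.pi / 3 : ℝ) : ℂ) * I := by
    push_cast; ring
  rw [ω, hangle, exp_ofReal_mul_I, Real.cos_pi_sub, Real.sin_pi_sub,
    Real.cos_pi_div_three, Real.sin_pi_div_three]
  push_cast; ring

lemma τ_eq_sqrt_three_mul_exp : τ = Real.sqrt 3 * exp ((Real.pi / 6 : ℝ) * I) := by
  have hsqrt : (Real.sqrt 3 : ℂ) * Real.sqrt 3 = 3 := by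
    rw [← ofReal_mul, Real.mul_self_sqrt (by norm_num)]; norm_num
  rw [τ, ω_eq, exp_ofReal_mul_I, Real.cos_pi_div_six, Real.sin_pi_div_six]
  push_cast
  linear_combination (-(1 / 2) : ℂ) * hsqrt

lemma re_τ_pow (k : ℕ) : (τ ^ k).re = Real.sqrt 3 ^ k * Real.cos (k * Real.pi / 6) := by
  have hangle : (k : ℂ) * ((Real.pi / 6 : ℝ) * I) = ((k * Real.pi / 6 : ℝ) : ℂ) * I := by
    push_cast; ring
  rw [τ_eq_sqrt_three_mul_exp, mul_pow, ← exp_nat_mul, hangle, ← ofReal_pow, re_ofReal_mul,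
    exp_ofReal_mul_I_re]

lemma norm_τ : ‖τ‖ = Real.sqrt 3 := by
  rw [τ_eq_sqrt_three_mul_exp, norm_mul, norm_exp_ofReal_mul_I, mul_one, norm_real,
    Real.norm_of_nonneg (Real.sqrt_nonneg _)]

lemma Real.cos_nat_mul_pi_div_six_nonpos {k : ℕ} (h3 : 3 ≤ k % 12) (h9 : k % 12 ≤ 9) :
    Real.cos (k * Real.pi / 6) ≤ 0 := by
  have hperiod : (k : ℝ) * Real.pi / 6 =
      (k % 12 : ℕ) * Real.pi / 6 + (k / 12 : ℕ) * (2 * Real.pi) := by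
    have hdiv : (k : ℝ) = 12 * (k / 12 : ℕ) + (k % 12 : ℕ) := by
      exact_mod_cast (Nat.div_add_mod k 12).symm
    rw [hdiv]; ring
  have h3' : (3 : ℝ) ≤ (k % 12 : ℕ) := by exact_mod_cast h3
  have h9' : ((k % 12 : ℕ) : ℝ) ≤ 9 := by exact_mod_cast h9
  rw [hperiod, Real.cos_add_nat_mul_two_pi]
  apply Real.cos_nonpos_of_pi_div_two_le_of_le <;> nlinarith [Real.pi_pos]

lemma Complex.sq_norm_lt_sq_norm_sub_one {z : ℂ} (hz : z.re ≤ 0) : ‖z‖ ^ 2 < ‖z - 1‖ ^ 2 := by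
  rw [Complex.sq_norm, Complex.sq_norm, normSq_apply, normSq_apply, sub_re, sub_im, one_re,
    one_im]
  nlinarith

theorem normSq_tau_pow_sub_one_gt_general (k : ℕ)
    (hmod : k % 12 ∈ ({3, 4, 5, 6, 7, 8, 9} : Finset ℕ)) :
    ‖τ ^ k - 1‖ ^ 2 > (3 : ℝ) ^ k := by
  have hrange : 3 ≤ k % 12 ∧ k % 12 ≤ 9 := by
    simp only [Finset.mem_insert, Finset.mem_singleton] at hmod; omega
  have hre : (τ ^ k).re ≤ 0 := by
    rw [re_τ_pow]
    exact mul_nonpos_of_nonneg_of_nonpos (by positivity)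
      (Real.cos_nat_mul_pi_div_six_nonpos hrange.1 hrange.2)
  calc (3 : ℝ) ^ k = ‖τ ^ k‖ ^ 2 := by
        rw [norm_pow, norm_τ, ← pow_mul, mul_comm, pow_mul, Real.sq_sqrt (by norm_num)]
    _ < ‖τ ^ k - 1‖ ^ 2 := sq_norm_lt_sq_norm_sub_one hre

/-- For `k ≥ 3` with `k mod 12 ∈ {3,4,5,6,7,8,9}`, one has
`|τ^k − 1|² > 3^k`. -/
theorem normSq_tau_pow_sub_one_gt (k : ℕ) (hk : 3 ≤ k)
    (hmod : k % 12 ∈ ({3, 4, 5, 6, 7, 8, 9} : Finset ℕ)) :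
    ‖τ ^ k - 1‖ ^ 2 > (3 : ℝ) ^ k :=
  normSq_tau_pow_sub_one_gt_general k hmod
end

section
/- Let ω = e^{2πi/3} ∈ ℂ and τ = ω + 2. For every natural number k with k ≡ 1 (mod 12) or k ≡ 11 (mod 12), one has |τ^k − 1|² = 1 + 3^k − 3^{(k+1)/2}. -/
/-!
`τ = 3/2 + (√3/2) i = √3 e^{iπ/6}` is a root of `X² − 3X + 3`, so `τ⁶ = −27` and `τ¹² = 3⁶`;
together with `τ τ̄ = 3` this gives `τ¹¹ = 3⁵ τ̄`. Hence for `k ≡ ±1 (mod 12)` the power `τ^k` is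
`3^((k−1)/2)` times `τ` or `τ̄`, a number `z` with `Re z = 3/2` and `|z|² = 3`, and
`|r z − 1|² = r²|z|² − 2 r Re z + 1` gives the claim.
-/

open Complex

open ComplexConjugate

theorem Complex.sq_norm_ofReal_mul_sub_one (r : ℝ) (z : ℂ) :
    ‖(r : ℂ) * z - 1‖ ^ 2 = r ^ 2 * ‖z‖ ^ 2 - 2 * r * z.re + 1 := by
  simp only [Complex.sq_norm, normSq_apply, sub_re, sub_im, re_ofReal_mul, im_ofReal_mul,
    one_re, one_im]
  ring

theorem Real.cos_two_pi_div_three : Real.cos (2 * Real.pi / 3) = -1 / 2 := by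
  rw [show 2 * Real.pi / 3 = Real.pi - Real.pi / 3 by ring, Real.cos_pi_sub,
    Real.cos_pi_div_three]
  norm_num

theorem Real.sin_two_pi_div_three : Real.sin (2 * Real.pi / 3) = √3 / 2 := by
  rw [show 2 * Real.pi / 3 = Real.pi - Real.pi / 3 by ring, Real.sin_pi_sub,
    Real.sin_pi_div_three]

theorem tau_re : τ.re = 3 / 2 := by
  rw [τ, ω, add_re, exp_re]
  simp [Real.cos_two_pi_div_three]
  norm_num

theorem tau_im : τ.im = √3 / 2 := by
  rw [τ, ω, add_im, exp_im]
  simp [Real.sin_two_pi_div_three]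

theorem sq_norm_tau : ‖τ‖ ^ 2 = 3 := by
  rw [Complex.sq_norm, normSq_apply, tau_re, tau_im]
  nlinarith [Real.sq_sqrt (show (0 : ℝ) ≤ 3 by norm_num)]

theorem tau_sq : τ ^ 2 = 3 * τ - 3 := by
  have h3 := Real.sq_sqrt (show (0 : ℝ) ≤ 3 by norm_num)
  apply Complex.ext <;> simp only [pow_two, mul_re, mul_im, sub_re, sub_im, tau_re, tau_im] <;>
    norm_num
  all_goals nlinarith

theorem tau_pow_six : τ ^ 6 = -27 := by
  linear_combination (τ ^ 4 + 3 * τ ^ 3 + 6 * τ ^ 2 + 9 * τ + 9) * tau_sq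

theorem tau_pow_twelve : τ ^ 12 = 3 ^ 6 := by
  linear_combination (τ ^ 6 - 27) * tau_pow_six

theorem tau_pow_eleven : τ ^ 11 = 3 ^ 5 * conj τ := by
  have hτ : τ ≠ 0 := fun h => by simpa [h] using sq_norm_tau
  apply mul_left_cancel₀ hτ
  rw [← pow_succ', tau_pow_twelve, mul_left_comm, mul_conj, normSq_eq_norm_sq, sq_norm_tau]
  norm_num

theorem tau_pow_of_mod_twelve_eq_one {k : ℕ} (hk : k % 12 = 1) :
    τ ^ k = ((3 ^ (k / 2) : ℝ) : ℂ) * τ := by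
  obtain ⟨m, rfl⟩ : ∃ m, k = 12 * m + 1 := ⟨k / 12, by omega⟩
  rw [show (12 * m + 1) / 2 = 6 * m by omega, pow_succ, pow_mul, pow_mul, tau_pow_twelve]
  push_cast
  ring

theorem tau_pow_of_mod_twelve_eq_eleven {k : ℕ} (hk : k % 12 = 11) :
    τ ^ k = ((3 ^ (k / 2) : ℝ) : ℂ) * conj τ := by
  obtain ⟨m, rfl⟩ : ∃ m, k = 12 * m + 11 := ⟨k / 12, by omega⟩
  rw [show (12 * m + 11) / 2 = 6 * m + 5 by omega, pow_add, pow_add, pow_mul, pow_mul,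
    tau_pow_eleven, tau_pow_twelve]
  push_cast
  ring

/-- For `k ≡ ±1 (mod 12)`, one has `|τ^k − 1|² = 1 + 3^k − 3^{(k+1)/2}`. -/
theorem normSq_tau_pow_sub_one_of_one_or_eleven (k : ℕ)
    (hmod : k % 12 = 1 ∨ k % 12 = 11) :
    ‖τ ^ k - 1‖ ^ 2 = 1 + (3 : ℝ) ^ k - (3 : ℝ) ^ ((k + 1) / 2) := by
  obtain ⟨z, hτk, hre, hnorm⟩ :
      ∃ z : ℂ, τ ^ k = ((3 ^ (k / 2) : ℝ) : ℂ) * z ∧ z.re = 3 / 2 ∧ ‖z‖ ^ 2 = 3 := by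
    rcases hmod with hk | hk
    · exact ⟨τ, tau_pow_of_mod_twelve_eq_one hk, tau_re, sq_norm_tau⟩
    · exact ⟨conj τ, tau_pow_of_mod_twelve_eq_eleven hk, by rw [conj_re, tau_re],
        by rw [norm_conj, sq_norm_tau]⟩
  obtain ⟨j, rfl⟩ : ∃ j, k = 2 * j + 1 := ⟨k / 2, by omega⟩
  rw [hτk, Complex.sq_norm_ofReal_mul_sub_one, hre, hnorm, show (2 * j + 1) / 2 = j by omega,
    show (2 * j + 1 + 1) / 2 = j + 1 by omega]
  ring
end
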